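/- arXiv:math/0011124 — 5 statements merged into one kernel-verified Lean document; each statement's English description precedes it below -/
import Mathlib

section
/- Let V be an n-dimensional vector space over a field F with n even and n ≥ 4, and let X be a set of 2-dimensional subspaces of V satisfying condition S for k = 2. Then there exist a field automorphism σ of F and a map Ω : V × V → F which is additive in each variable, satisfies Ω(a·x, y) = σ(a)·Ω(x,y) and Ω(x, a·y) = σ(a)·Ω(x,y) for all a ∈ F and x,y ∈ V, is nondegenerate, and satisfies Ω(x,x) = 0 for all x ∈ V, such that X is exactly the set of 2-dimensional subspaces of V on which the restriction of Ω is singular. -/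
open Submodule LinearMap Module

namespace Stmt3Aux

variable {F V : Type*} [Field F] [AddCommGroup V] [Module F V]

/-- From `ker φ ≤ ker χ`, `χ` is a multiple of `φ`. -/
theorem ker_le_one (φ χ : V →ₗ[F] F) (h : ∀ v, φ v = 0 → χ v = 0) :
    ∃ a : F, χ = a • φ := by
  by_cases hφ : ∃ u, φ u ≠ 0
  · obtain ⟨u, hu⟩ := hφ
    refine ⟨χ u / φ u, ?_⟩
    ext v
    have hv : φ (v - (φ v / φ u) • u) = 0 := by
      simp only [map_sub, map_smul, smul_eq_mul]
      field_simp
      ring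
    have := h _ hv
    simp only [map_sub, map_smul, smul_eq_mul, sub_eq_zero] at this
    simp only [LinearMap.smul_apply, smul_eq_mul]
    rw [this]; field_simp
  · push_neg at hφ
    refine ⟨0, ?_⟩
    ext v
    simp [h v (hφ v)]

theorem ker_le_two (φ₁ φ₂ χ : V →ₗ[F] F) (h : ∀ v, φ₁ v = 0 → φ₂ v = 0 → χ v = 0) :
    ∃ a b : F, χ = a • φ₁ + b • φ₂ := by
  by_cases hc : ∀ v, φ₁ v = 0 → φ₂ v = 0
  · obtain ⟨a, ha⟩ := ker_le_one φ₁ χ (fun v hv => h v hv (hc v hv))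
    exact ⟨a, 0, by simp [ha]⟩
  · push_neg at hc
    obtain ⟨u, hu1, hu2⟩ := hc
    obtain ⟨a, ha⟩ := ker_le_one φ₁ (χ - (χ u / φ₂ u) • φ₂) (by
      intro v hv
      have hv'' : φ₂ (v - (φ₂ v / φ₂ u) • u) = 0 := by
        simp only [map_sub, map_smul, smul_eq_mul, sub_eq_zero]
        field_simp
      have hv' : φ₁ (v - (φ₂ v / φ₂ u) • u) = 0 := by
        simp only [map_sub, map_smul, smul_eq_mul, hv, hu1, mul_zero, sub_zero]
      have := h _ hv' hv''
      simp only [map_sub, map_smul, smul_eq_mul, sub_eq_zero] at this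
      simp only [LinearMap.sub_apply, LinearMap.smul_apply, smul_eq_mul, sub_eq_zero]
      rw [this]; field_simp)
    refine ⟨a, χ u / φ₂ u, ?_⟩
    conv_lhs => rw [show χ = (χ - (χ u / φ₂ u) • φ₂) + (χ u / φ₂ u) • φ₂ by abel, ha]

theorem ker_le_three (φ₁ φ₂ φ₃ χ : V →ₗ[F] F)
    (h : ∀ v, φ₁ v = 0 → φ₂ v = 0 → φ₃ v = 0 → χ v = 0) :
    ∃ a b c : F, χ = a • φ₁ + b • φ₂ + c • φ₃ := by
  by_cases hc : ∀ v, φ₁ v = 0 → φ₂ v = 0 → φ₃ v = 0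
  · obtain ⟨a, b, hab⟩ := ker_le_two φ₁ φ₂ χ (fun v h1 h2 => h v h1 h2 (hc v h1 h2))
    exact ⟨a, b, 0, by simp [hab]⟩
  · push_neg at hc
    obtain ⟨u, hu1, hu2, hu3⟩ := hc
    obtain ⟨a, b, hab⟩ := ker_le_two φ₁ φ₂ (χ - (χ u / φ₃ u) • φ₃) (by
      intro v h1 h2
      have hv''' : φ₃ (v - (φ₃ v / φ₃ u) • u) = 0 := by
        simp only [map_sub, map_smul, smul_eq_mul, sub_eq_zero]
        field_simp
      have hv' : φ₁ (v - (φ₃ v / φ₃ u) • u) = 0 := by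
        simp only [map_sub, map_smul, smul_eq_mul, h1, hu1, mul_zero, sub_zero]
      have hv'' : φ₂ (v - (φ₃ v / φ₃ u) • u) = 0 := by
        simp only [map_sub, map_smul, smul_eq_mul, h2, hu2, mul_zero, sub_zero]
      have := h _ hv' hv'' hv'''
      simp only [map_sub, map_smul, smul_eq_mul, sub_eq_zero] at this
      simp only [LinearMap.sub_apply, LinearMap.smul_apply, smul_eq_mul, sub_eq_zero]
      rw [this]; field_simp)
    refine ⟨a, b, χ u / φ₃ u, ?_⟩
    conv_lhs => rw [show χ = (χ - (χ u / φ₃ u) • φ₃) + (χ u / φ₃ u) • φ₃ by abel, hab]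

theorem smul_mem_cancel {H : Submodule F V} {a : F} {y : V} (ha : a ≠ 0)
    (h : a • y ∈ H) : y ∈ H := by
  have := H.smul_mem a⁻¹ h
  rwa [smul_smul, inv_mul_cancel₀ ha, one_smul] at this

theorem exists_notMem_top {H : Submodule F V} (h : H ≠ ⊤) : ∃ v, v ∉ H := by
  by_contra hc
  push_neg at hc
  exact h (eq_top_iff.mpr fun v _ => hc v)

theorem two_cover (H₁ H₂ : Submodule F V) (h₁ : H₁ ≠ ⊤) (h₂ : H₂ ≠ ⊤) :
    ∃ v, v ∉ H₁ ∧ v ∉ H₂ := by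
  obtain ⟨a, ha⟩ := exists_notMem_top h₁
  obtain ⟨b, hb⟩ := exists_notMem_top h₂
  by_cases hab : a ∉ H₂
  · exact ⟨a, ha, hab⟩
  by_cases hba : b ∉ H₁
  · exact ⟨b, hba, hb⟩
  push_neg at hab hba
  refine ⟨a + b, fun h => ha ?_, fun h => hb ?_⟩
  · have := H₁.sub_mem h hba; simpa using this
  · have := H₂.sub_mem h hab; simpa using this

theorem three_cover (c : F) (hc0 : c ≠ 0) (hc1 : c ≠ 1)
    (H₁ H₂ H₃ : Submodule F V) (h₁ : H₁ ≠ ⊤) (h₂ : H₂ ≠ ⊤) (h₃ : H₃ ≠ ⊤) :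
    ∃ v, v ∉ H₁ ∧ v ∉ H₂ ∧ v ∉ H₃ := by
  obtain ⟨y, hy2, hy3⟩ := two_cover H₂ H₃ h₂ h₃
  by_cases hy1 : y ∉ H₁
  · exact ⟨y, hy1, hy2, hy3⟩
  push_neg at hy1
  obtain ⟨x, hx1⟩ := exists_notMem_top h₁
  have key : ∀ a : F, x + a • y ∉ H₁ := by
    intro a h
    exact hx1 (by simpa using H₁.sub_mem h (H₁.smul_mem a hy1))
  have no_two : ∀ H : Submodule F V, y ∉ H → ∀ a b : F, a ≠ b →
      x + a • y ∈ H → x + b • y ∈ H → False := by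
    intro H hy a b hab ha' hb'
    have hmem : (a - b) • y ∈ H := by
      have heq : (a - b) • y = (x + a • y) - (x + b • y) := by module
      rw [heq]; exact H.sub_mem ha' hb'
    exact hy (smul_mem_cancel (sub_ne_zero.mpr hab) hmem)
  by_cases hall : ∀ a : F, x + a • y ∈ H₂ ∨ x + a • y ∈ H₃
  · exfalso
    have h0 := hall 0
    have h1' := hall 1
    have hc' := hall c
    rcases h0 with h0 | h0 <;> rcases h1' with h1' | h1' <;> rcases hc' with hc' | hc'
    · exact no_two H₂ hy2 0 1 (by norm_num) h0 h1'
    · exact no_two H₂ hy2 0 1 (by norm_num) h0 h1'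
    · exact no_two H₂ hy2 0 c (Ne.symm hc0) h0 hc'
    · exact no_two H₃ hy3 1 c (Ne.symm hc1) h1' hc'
    · exact no_two H₂ hy2 1 c (Ne.symm hc1) h1' hc'
    · exact no_two H₃ hy3 0 c (Ne.symm hc0) h0 hc'
    · exact no_two H₃ hy3 0 1 (by norm_num) h0 h1'
    · exact no_two H₃ hy3 0 1 (by norm_num) h0 h1'
  · push_neg at hall
    obtain ⟨a, ha2, ha3⟩ := hall
    exact ⟨x + a • y, key a, ha2, ha3⟩

end Stmt3Aux
structure NS (F V : Type*) [Field F] [AddCommGroup V] [Module F V] where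
  f : V → V →ₗ[F] F
  f_zero : f 0 = 0
  f_ne : ∀ x, x ≠ 0 → f x ≠ 0
  self : ∀ x, f x x = 0
  symm0 : ∀ x y, f x y = 0 → f y x = 0
  fsmul : ∀ (a : F) (x : V), a ≠ 0 → f (a • x) = f x
  addker : ∀ x y z : V, f x z = 0 → f y z = 0 → f (x + y) z = 0
  inj : ∀ x y, x ≠ 0 → y ≠ 0 → LinearMap.ker (f x) = LinearMap.ker (f y) → ∃ c : F, x = c • y

namespace NS

variable {F V : Type*} [Field F] [AddCommGroup V] [Module F V] (S : NS F V)

theorem symm_ne {x y : V} (h : S.f x y ≠ 0) : S.f y x ≠ 0 :=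
  fun h' => h (S.symm0 y x h')

theorem left_ne {x y : V} (h : S.f x y ≠ 0) : x ≠ 0 := by
  rintro rfl; rw [S.f_zero] at h; exact h rfl

theorem right_ne {x y : V} (h : S.f x y ≠ 0) : y ≠ 0 := by
  rintro rfl; exact h (map_zero _)

theorem not_prop {x y : V} (h : S.f x y ≠ 0) : ∀ c : F, x ≠ c • y := by
  intro c hc
  rcases eq_or_ne c 0 with rfl | hc0
  · rw [hc, zero_smul] at h; rw [S.f_zero] at h; exact h rfl
  · rw [hc, S.fsmul c y hc0] at h; exact h (S.self y)

theorem expand {x y : V} (hxy : ∀ c : F, x ≠ c • y) (hyx : ∀ c : F, y ≠ c • x) :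
    ∃ a b : F, a ≠ 0 ∧ b ≠ 0 ∧ S.f (x + y) = a • S.f x + b • S.f y ∧
      a * S.f x y + b * S.f y x = 0 := by
  have hx : x ≠ 0 := by rintro rfl; exact hxy 0 (by simp)
  have hy : y ≠ 0 := by rintro rfl; exact hyx 0 (by simp)
  have hxy0 : x + y ≠ 0 := by
    intro h
    exact hxy (-1) (by rw [neg_one_smul, eq_neg_iff_add_eq_zero.mpr h])
  obtain ⟨a, b, hab⟩ := Stmt3Aux.ker_le_two (S.f x) (S.f y) (S.f (x + y))
    (fun v h1 h2 => S.addker x y v h1 h2)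
  have ha : a ≠ 0 := by
    rintro rfl
    rcases eq_or_ne b 0 with rfl | hb
    · exact S.f_ne _ hxy0 (by rw [hab]; simp)
    · have hker : LinearMap.ker (S.f (x + y)) = LinearMap.ker (S.f y) := by
        rw [hab]; simp only [zero_smul, zero_add]
        exact LinearMap.ker_smul _ b hb
      obtain ⟨c, hc⟩ := S.inj (x + y) y hxy0 hy hker
      exact hxy (c - 1) (by rw [sub_smul, one_smul, ← hc]; abel)
  have hb : b ≠ 0 := by
    rintro rfl
    rcases eq_or_ne a 0 with rfl | ha
    · exact S.f_ne _ hxy0 (by rw [hab]; simp)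
    · have hker : LinearMap.ker (S.f (x + y)) = LinearMap.ker (S.f x) := by
        rw [hab]; simp only [zero_smul, add_zero]
        exact LinearMap.ker_smul _ a ha
      obtain ⟨c, hc⟩ := S.inj (x + y) x hxy0 hx hker
      exact hyx (c - 1) (by rw [sub_smul, one_smul, ← hc]; abel)
  refine ⟨a, b, ha, hb, hab, ?_⟩
  have h0 : S.f (x + y) (x + y) = 0 := S.self _
  rw [hab] at h0
  have h0' : b * S.f y x + a * S.f x y = 0 := by
    simpa [map_add, S.self, smul_eq_mul] using h0
  linear_combination h0'

theorem cocycle {x y z : V} (hxy : S.f x y ≠ 0) (hyz : S.f y z ≠ 0) (hzx : S.f z x ≠ 0) :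
    S.f y x * S.f z y * S.f x z = -(S.f x y * S.f y z * S.f z x) := by
  have hyx := S.symm_ne hxy
  have hzy := S.symm_ne hyz
  have hxz := S.symm_ne hzx
  set x' := S.f z y • x with hx'
  set y' := (-(S.f z x)) • y with hy'
  have hzx' : -(S.f z x) ≠ 0 := neg_ne_zero.mpr hzx
  have hfx' : S.f x' = S.f x := S.fsmul _ _ hzy
  have hfy' : S.f y' = S.f y := S.fsmul _ _ hzx'
  have hpq : ∀ c : F, x' ≠ c • y' := by
    intro c hc
    refine S.not_prop hxy ((S.f z y)⁻¹ * (c * -(S.f z x))) ?_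
    rw [mul_smul, mul_smul, ← hy', ← hc, hx', smul_smul, inv_mul_cancel₀ hzy, one_smul]
  have hqp : ∀ c : F, y' ≠ c • x' := by
    intro c hc
    refine S.not_prop hyx ((-(S.f z x))⁻¹ * (c * S.f z y)) ?_
    rw [mul_smul, mul_smul, ← hx', ← hc, hy', smul_smul, inv_mul_cancel₀ hzx', one_smul]
  obtain ⟨a, b, ha, hb, hab, heval⟩ := S.expand hpq hqp
  -- heval : a * S.f x' y' + b * S.f y' x' = 0
  rw [hfx', hfy'] at heval
  have e1 : S.f x y' = -(S.f z x) * S.f x y := by rw [hy', map_smul, smul_eq_mul]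
  have e2 : S.f y x' = S.f z y * S.f y x := by rw [hx', map_smul, smul_eq_mul]
  rw [e1, e2] at heval
  -- heval : a * (-(S.f z x) * S.f x y) + b * (S.f z y * S.f y x) = 0
  have hzu : S.f (x' + y') z = 0 := by
    have : S.f z (x' + y') = 0 := by
      rw [map_add, hx', hy', map_smul, map_smul, smul_eq_mul, smul_eq_mul]
      ring
    exact S.symm0 _ _ this
  rw [hab, hfx', hfy'] at hzu
  simp only [LinearMap.add_apply, LinearMap.smul_apply, smul_eq_mul] at hzu
  -- hzu : a * S.f x z + b * S.f y z = 0
  have key : b * (S.f y x * S.f z y * S.f x z + S.f x y * S.f y z * S.f z x) = 0 := by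
    linear_combination (S.f x z) * heval + (S.f z x * S.f x y) * hzu
  have h2 := (mul_eq_zero.mp key).resolve_left hb
  linear_combination h2

end NS
namespace NS

variable {F V : Type*} [Field F] [AddCommGroup V] [Module F V] (S : NS F V)

/-- The gauge ratio. -/
noncomputable def val (e x y : V) : F :=
  (S.f y x * S.f e y) / (S.f x y * S.f y e)

theorem val_eq_base {e x y : V} (hxy : S.f x y ≠ 0) (hey : S.f e y ≠ 0)
    (hxe : S.f x e ≠ 0) :
    S.val e x y = -(S.f e x) / (S.f x e) := by
  have hye := S.symm_ne hey
  have hex := S.symm_ne hxe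
  have co := S.cocycle hxy hye hex
  rw [val, div_eq_div_iff (mul_ne_zero hxy hye) hxe]
  linear_combination co

theorem val_eq_step {e x y y' : V} (hxy : S.f x y ≠ 0) (hey : S.f e y ≠ 0)
    (hxy' : S.f x y' ≠ 0) (hey' : S.f e y' ≠ 0) (hyy' : S.f y y' ≠ 0) :
    S.val e x y = S.val e x y' := by
  have hye := S.symm_ne hey
  have hye' := S.symm_ne hey'
  have hy'x := S.symm_ne hxy'
  have hy'y := S.symm_ne hyy'
  have c₁ := S.cocycle hxy hyy' hy'x
  have c₂ := S.cocycle hyy' hye' hey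
  rw [val, val, div_eq_div_iff (mul_ne_zero hxy hye) (mul_ne_zero hxy' hye')]
  have hK : (S.f y x * S.f e y * (S.f x y' * S.f y' e)
      - S.f y' x * S.f e y' * (S.f x y * S.f y e)) * (S.f y' y * S.f y y') = 0 := by
    linear_combination (S.f e y * S.f y' e * S.f y y') * c₁
      - (S.f x y * S.f y' x * S.f y y') * c₂
  have := (mul_eq_zero.mp hK).resolve_right (mul_ne_zero hy'y hyy')
  linear_combination this

theorem val_smul {e x y : V} (c : F) (hc : c ≠ 0) : S.val e x (c • y) = S.val e x y := by
  rw [val, val, S.fsmul c y hc, map_smul, map_smul, smul_eq_mul, smul_eq_mul]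
  rw [show S.f y x * (c * S.f e y) = c * (S.f y x * S.f e y) from by ring,
    show c * S.f x y * S.f y e = c * (S.f x y * S.f y e) from by ring,
    mul_div_mul_left _ _ hc]

theorem val_eq (e : V) {x y y' : V} (hxy : S.f x y ≠ 0) (hey : S.f e y ≠ 0)
    (hxy' : S.f x y' ≠ 0) (hey' : S.f e y' ≠ 0) :
    S.val e x y = S.val e x y' := by
  by_cases hF2 : ∀ c : F, c = 0 ∨ c = 1
  · have one : ∀ u v : V, S.f u v ≠ 0 → S.f u v = 1 := fun u v h => (hF2 _).resolve_left h
    rw [val, val, one _ _ hxy, one _ _ hey, one _ _ hxy', one _ _ hey',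
      one _ _ (S.symm_ne hxy), one _ _ (S.symm_ne hxy'),
      one _ _ (S.symm_ne hey), one _ _ (S.symm_ne hey')]
  push_neg at hF2
  obtain ⟨c, hc0, hc1⟩ := hF2
  by_cases hxe : S.f x e = 0
  case neg => rw [S.val_eq_base hxy hey hxe, S.val_eq_base hxy' hey' hxe]
  by_cases hyy' : S.f y y' ≠ 0
  · exact S.val_eq_step hxy hey hxy' hey' hyy'
  push_neg at hyy'
  by_cases hprop : ∃ d : F, y' = d • y
  · obtain ⟨d, rfl⟩ := hprop
    have hd : d ≠ 0 := by
      rintro rfl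
      rw [zero_smul] at hey'
      exact hey' (map_zero _)
    exact (S.val_smul d hd).symm
  by_cases hwitness : ∃ w, S.f x w ≠ 0 ∧ S.f e w ≠ 0 ∧ S.f y w ≠ 0 ∧ S.f y' w ≠ 0
  · obtain ⟨w, hw1, hw2, hw3, hw4⟩ := hwitness
    calc S.val e x y = S.val e x w := S.val_eq_step hxy hey hw1 hw2 hw3
    _ = S.val e x y' := S.val_eq_step hw1 hw2 hxy' hey' (S.symm_ne hw4)
  push_neg at hwitness
  -- covering case
  have hx0 : x ≠ 0 := S.left_ne hxy
  have hy0 : y ≠ 0 := S.right_ne hxy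
  have hy'0 : y' ≠ 0 := S.right_ne hxy'
  have he0 : e ≠ 0 := S.left_ne hey
  have kx : LinearMap.ker (S.f x) ≠ ⊤ := by
    rw [Ne, LinearMap.ker_eq_top]; exact S.f_ne x hx0
  have ke : LinearMap.ker (S.f e) ≠ ⊤ := by
    rw [Ne, LinearMap.ker_eq_top]; exact S.f_ne e he0
  have ky : LinearMap.ker (S.f y) ≠ ⊤ := by
    rw [Ne, LinearMap.ker_eq_top]; exact S.f_ne y hy0
  obtain ⟨u, hu1, hu2, hu3⟩ := Stmt3Aux.three_cover c hc0 hc1 _ _ _ kx ke ky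
  rw [LinearMap.mem_ker] at hu1 hu2 hu3
  have hy'u : S.f y' u = 0 := hwitness u hu1 hu2 hu3
  have hkerle : ∀ v, S.f x v = 0 → S.f e v = 0 → S.f y v = 0 → S.f y' v = 0 := by
    intro v h1 h2 h3
    have l1 : S.f x (u + v) ≠ 0 := by rw [map_add, h1, add_zero]; exact hu1
    have l2 : S.f e (u + v) ≠ 0 := by rw [map_add, h2, add_zero]; exact hu2
    have l3 : S.f y (u + v) ≠ 0 := by rw [map_add, h3, add_zero]; exact hu3
    have := hwitness (u + v) l1 l2 l3
    rwa [map_add, hy'u, zero_add] at this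
  obtain ⟨α, β, γ, hy'f⟩ := Stmt3Aux.ker_le_three (S.f x) (S.f e) (S.f y) (S.f y') hkerle
  have happly : ∀ v, S.f y' v = α * S.f x v + β * S.f e v + γ * S.f y v := by
    intro v
    rw [hy'f]
    simp [smul_eq_mul]
  have hY'Y : S.f y' y = 0 := S.symm0 _ _ hyy'
  have hEX : S.f e x = 0 := S.symm0 _ _ hxe
  have evy' : α * S.f x y' + β * S.f e y' = 0 := by
    have h0 := S.self y'
    rw [happly y'] at h0
    rw [hyy'] at h0
    linear_combination h0
  have evy : α * S.f x y + β * S.f e y = 0 := by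
    have h0 := hY'Y
    rw [happly y, S.self y] at h0
    linear_combination h0
  have eve : S.f y' e = γ * S.f y e := by
    rw [happly e, hxe, S.self e]; ring
  have evx : S.f y' x = γ * S.f y x := by
    rw [happly x, hEX, S.self x]; ring
  have hye := S.symm_ne hey
  have hy'e := S.symm_ne hey'
  have hγ : γ ≠ 0 := by
    rintro rfl
    rw [zero_mul] at eve
    exact hy'e eve
  have hβ : β ≠ 0 := by
    rintro rfl
    have hα : α = 0 := by
      have := evy
      rw [zero_mul, add_zero] at this
      exact (mul_eq_zero.mp this).resolve_right hxy
    subst hα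
    have hker2 : LinearMap.ker (S.f y') = LinearMap.ker (S.f y) := by
      rw [hy'f]
      simp only [zero_smul, zero_add]
      exact LinearMap.ker_smul _ γ hγ
    obtain ⟨d, hd⟩ := S.inj y' y hy'0 hy0 hker2
    exact hprop ⟨d, hd⟩
  have hα : α ≠ 0 := by
    rintro rfl
    rw [zero_mul, zero_add] at evy
    exact hβ ((mul_eq_zero.mp evy).resolve_right hey)
  have hkey2 : α * (S.f e y * S.f x y') = α * (S.f e y' * S.f x y) := by
    linear_combination S.f e y * evy' - S.f e y' * evy
  have hkey := mul_left_cancel₀ hα hkey2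
  rw [val, val, div_eq_div_iff (mul_ne_zero hxy hye) (mul_ne_zero hxy' hy'e), evx, eve]
  linear_combination (γ * S.f y x * S.f y e) * hkey

theorem good_exists (e : V) (he : e ≠ 0) (x : V) (hx : x ≠ 0) :
    ∃ y, S.f x y ≠ 0 ∧ S.f e y ≠ 0 := by
  have kx : LinearMap.ker (S.f x) ≠ ⊤ := by
    rw [Ne, LinearMap.ker_eq_top]; exact S.f_ne x hx
  have ke : LinearMap.ker (S.f e) ≠ ⊤ := by
    rw [Ne, LinearMap.ker_eq_top]; exact S.f_ne e he
  obtain ⟨v, h1, h2⟩ := Stmt3Aux.two_cover _ _ kx ke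
  rw [LinearMap.mem_ker] at h1 h2
  exact ⟨v, h1, h2⟩

open Classical in
noncomputable def mu (e : V) (he : e ≠ 0) (x : V) : F :=
  if hx : x = 0 then 0 else S.val e x (S.good_exists e he x hx).choose

theorem mu_zero (e : V) (he : e ≠ 0) : S.mu e he 0 = 0 := dif_pos rfl

theorem mu_spec (e : V) (he : e ≠ 0) {x y : V} (hx : x ≠ 0)
    (h1 : S.f x y ≠ 0) (h2 : S.f e y ≠ 0) : S.mu e he x = S.val e x y := by
  rw [mu, dif_neg hx]
  obtain ⟨g1, g2⟩ := (S.good_exists e he x hx).choose_spec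
  exact S.val_eq e g1 g2 h1 h2

theorem mu_ne (e : V) (he : e ≠ 0) {x : V} (hx : x ≠ 0) : S.mu e he x ≠ 0 := by
  rw [mu, dif_neg hx]
  obtain ⟨g1, g2⟩ := (S.good_exists e he x hx).choose_spec
  rw [val]
  exact div_ne_zero (mul_ne_zero (S.symm_ne g1) g2)
    (mul_ne_zero g1 (S.symm_ne g2))

theorem mu_one_of_two (hF2 : ∀ c : F, c = 0 ∨ c = 1) (e : V) (he : e ≠ 0)
    {x : V} (hx : x ≠ 0) : S.mu e he x = 1 := by
  rw [mu, dif_neg hx]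
  obtain ⟨g1, g2⟩ := (S.good_exists e he x hx).choose_spec
  have one : ∀ u v : V, S.f u v ≠ 0 → S.f u v = 1 := fun u v h => (hF2 _).resolve_left h
  rw [val, one _ _ g1, one _ _ g2, one _ _ (S.symm_ne g1), one _ _ (S.symm_ne g2)]
  norm_num

theorem mu_smul (e : V) (he : e ≠ 0) {a : F} {x : V} (ha : a ≠ 0) (hx : x ≠ 0) :
    S.mu e he (a • x) = a * S.mu e he x := by
  obtain ⟨y, h1, h2⟩ := S.good_exists e he x hx
  have hax : a • x ≠ 0 := smul_ne_zero ha hx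
  have h1' : S.f (a • x) y ≠ 0 := by rw [S.fsmul a x ha]; exact h1
  rw [S.mu_spec e he hax h1' h2, S.mu_spec e he hx h1 h2, val, val,
    S.fsmul a x ha, map_smul, smul_eq_mul]
  rw [show a * S.f y x * S.f e y = a * (S.f y x * S.f e y) from by ring, mul_div_assoc]

theorem skew (e : V) (he : e ≠ 0) {x z : V} (hx : x ≠ 0) (hz : z ≠ 0) :
    S.mu e he x * S.f x z = -(S.mu e he z * S.f z x) := by
  by_cases hxz : S.f x z = 0
  · rw [hxz, S.symm0 x z hxz]; ring
  have hzx := S.symm_ne hxz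
  by_cases hF2 : ∀ c : F, c = 0 ∨ c = 1
  · have hm1 : (-1 : F) = 1 := by
      rcases hF2 (-1) with h | h
      · exact absurd (neg_eq_zero.mp h) one_ne_zero
      · exact h
    rw [S.mu_one_of_two hF2 e he hx, S.mu_one_of_two hF2 e he hz,
      (hF2 _).resolve_left hxz, (hF2 _).resolve_left hzx]
    linear_combination -hm1
  push_neg at hF2
  obtain ⟨c, hc0, hc1⟩ := hF2
  have kx : LinearMap.ker (S.f x) ≠ ⊤ := by
    rw [Ne, LinearMap.ker_eq_top]; exact S.f_ne x hx
  have ke : LinearMap.ker (S.f e) ≠ ⊤ := by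
    rw [Ne, LinearMap.ker_eq_top]; exact S.f_ne e he
  have kz : LinearMap.ker (S.f z) ≠ ⊤ := by
    rw [Ne, LinearMap.ker_eq_top]; exact S.f_ne z hz
  obtain ⟨w, hw1, hw2, hw3⟩ := Stmt3Aux.three_cover c hc0 hc1 _ _ _ kx ke kz
  rw [LinearMap.mem_ker] at hw1 hw2 hw3
  have hwx := S.symm_ne hw1
  have hwz := S.symm_ne hw3
  have hwe := S.symm_ne hw2
  rw [S.mu_spec e he hx hw1 hw2, S.mu_spec e he hz hw3 hw2, val, val]
  have co := S.cocycle hxz hw3 hwx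
  rw [div_mul_eq_mul_div, div_mul_eq_mul_div, ← neg_div,
    div_eq_div_iff (mul_ne_zero hw1 hwe) (mul_ne_zero hw3 hwe)]
  linear_combination (S.f e w * S.f w e) * co

theorem add_mu (e : V) (he : e ≠ 0) {x y : V} (hx : x ≠ 0) (hy : y ≠ 0)
    (hxy0 : x + y ≠ 0) :
    S.mu e he (x + y) • S.f (x + y) = S.mu e he x • S.f x + S.mu e he y • S.f y := by
  by_cases hdep : ∃ d : F, y = d • x
  · obtain ⟨d, rfl⟩ := hdep
    have hd : d ≠ 0 := fun h => hy (by rw [h, zero_smul])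
    have h1d : (1 : F) + d ≠ 0 := fun h => hxy0 (by
      rw [show x + d • x = (1 + d) • x from by module, h, zero_smul])
    rw [show x + d • x = (1 + d) • x from by module, S.mu_smul e he h1d hx,
      S.fsmul _ _ h1d, S.mu_smul e he hd hx, S.fsmul _ _ hd, ← add_smul]
    congr 1
    ring
  have hyx : ∀ d : F, y ≠ d • x := by push_neg at hdep; exact hdep
  have hxy : ∀ d : F, x ≠ d • y := by
    intro d hd
    have hd0 : d ≠ 0 := by rintro rfl; rw [zero_smul] at hd; exact hx hd
    exact hyx d⁻¹ (by rw [hd, smul_smul, inv_mul_cancel₀ hd0, one_smul])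
  obtain ⟨a, b, ha, hb, hab, heval⟩ := S.expand hxy hyx
  suffices hclaims : S.mu e he (x + y) * a = S.mu e he x ∧
      S.mu e he (x + y) * b = S.mu e he y by
    rw [hab, smul_add, smul_smul, smul_smul, hclaims.1, hclaims.2]
  by_cases hF2 : ∀ c : F, c = 0 ∨ c = 1
  · have ha1 : a = 1 := (hF2 a).resolve_left ha
    have hb1 : b = 1 := (hF2 b).resolve_left hb
    rw [S.mu_one_of_two hF2 e he hxy0, S.mu_one_of_two hF2 e he hx,
      S.mu_one_of_two hF2 e he hy, ha1, hb1]
    norm_num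
  push_neg at hF2
  obtain ⟨c, hc0, hc1⟩ := hF2
  have kx : LinearMap.ker (S.f x) ≠ ⊤ := by
    rw [Ne, LinearMap.ker_eq_top]; exact S.f_ne x hx
  have ky : LinearMap.ker (S.f y) ≠ ⊤ := by
    rw [Ne, LinearMap.ker_eq_top]; exact S.f_ne y hy
  have kw : LinearMap.ker (S.f (x + y)) ≠ ⊤ := by
    rw [Ne, LinearMap.ker_eq_top]; exact S.f_ne _ hxy0
  obtain ⟨z, hz1, hz2, hz3⟩ := Stmt3Aux.three_cover c hc0 hc1 _ _ _ kx ky kw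
  rw [LinearMap.mem_ker] at hz1 hz2 hz3
  have hz0 : z ≠ 0 := S.right_ne hz1
  have hzx := S.symm_ne hz1
  have hzy := S.symm_ne hz2
  have hzw := S.symm_ne hz3
  have hfwz : S.f (x + y) z = a * S.f x z + b * S.f y z := by
    rw [hab]; simp [smul_eq_mul]
  have hfzw : S.f z (x + y) = S.f z x + S.f z y := map_add _ _ _
  -- the key cross identity (E)
  have hE : a * (S.f z y * S.f x z) = b * (S.f z x * S.f y z) := by
    by_cases hxy2 : S.f x y = 0
    · -- orthogonal case
      have hyx2 : S.f y x = 0 := S.symm0 _ _ hxy2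
      have hyv : S.f y (y + z) ≠ 0 := by rw [map_add, S.self, zero_add]; exact hz2
      have hv0 : y + z ≠ 0 := S.right_ne hyv
      obtain ⟨c₁, d₁, hc₁, hd₁, hfv, hev1⟩ :=
        S.expand (S.not_prop hz2) (S.not_prop hzy)
      have hxv : S.f x (y + z) ≠ 0 := by rw [map_add, hxy2, zero_add]; exact hz1
      obtain ⟨p, q, hp, hq, hfxv, hev2⟩ :=
        S.expand (S.not_prop hxv) (S.not_prop (S.symm_ne hxv))
      have hwz' : S.f (x + y) z ≠ 0 := hz3
      obtain ⟨r, s, hr, hs, hfwz2, hev3⟩ :=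
        S.expand (S.not_prop hwz') (S.not_prop hzw)
      have hsum : x + (y + z) = (x + y) + z := by module
      have hEq1 : S.f (x + (y + z)) = p • S.f x + q • (c₁ • S.f y + d₁ • S.f z) := by
        rw [hfxv, hfv]
      have hEq2 : S.f (x + (y + z)) = r • (a • S.f x + b • S.f y) + s • S.f z := by
        rw [hsum, hfwz2, hab]
      have hindep : ∀ A B C : F, A • S.f x + B • S.f y + C • S.f z = 0 →
          A = 0 ∧ B = 0 ∧ C = 0 := by
        intro A B C h0
        have happ : ∀ v, A * S.f x v + B * S.f y v + C * S.f z v = 0 := by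
          intro v
          have := congrArg (fun φ : V →ₗ[F] F => φ v) h0
          simpa [smul_eq_mul] using this
        have hC : C = 0 := by
          have hax := happ x
          rw [S.self, hyx2] at hax
          simp only [mul_zero, zero_add, add_zero] at hax
          exact (mul_eq_zero.mp hax).resolve_right hzx
        subst hC
        by_cases hA : A = 0
        · subst hA
          refine ⟨rfl, ?_, rfl⟩
          have hBf : B • S.f y = 0 := by simpa using h0
          rcases smul_eq_zero.mp hBf with h | h
          · exact h
          · exact absurd h (S.f_ne y hy)
        · exfalso
          have hB : B ≠ 0 := by
            rintro rfl
            apply S.f_ne x hx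
            have hAf : A • S.f x = 0 := by simpa using h0
            rcases smul_eq_zero.mp hAf with h | h
            · exact absurd h hA
            · exact h
          have hAfx : A • S.f x = (-B) • S.f y := by
            rw [← sub_eq_zero, show A • S.f x - (-B) • S.f y
              = A • S.f x + B • S.f y + (0:F) • S.f z from by module]
            exact h0
          have hfx' : S.f x = (A⁻¹ * (-B)) • S.f y := by
            rw [mul_smul, ← hAfx, smul_smul, inv_mul_cancel₀ hA, one_smul]
          have hker : LinearMap.ker (S.f x) = LinearMap.ker (S.f y) := by
            rw [hfx']
            exact LinearMap.ker_smul _ _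
              (mul_ne_zero (inv_ne_zero hA) (neg_ne_zero.mpr hB))
          obtain ⟨d, hd⟩ := S.inj x y hx hy hker
          exact hxy d hd
      have h00 : (p - r * a) • S.f x + (q * c₁ - r * b) • S.f y
          + (q * d₁ - s) • S.f z = 0 := by
        rw [show (p - r * a) • S.f x + (q * c₁ - r * b) • S.f y + (q * d₁ - s) • S.f z
            = (p • S.f x + q • (c₁ • S.f y + d₁ • S.f z))
              - (r • (a • S.f x + b • S.f y) + s • S.f z) from by module,
          ← hEq1, ← hEq2, sub_self]
      obtain ⟨e1, e2, e3⟩ := hindep _ _ _ h00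
      have hpa : p = r * a := by linear_combination e1
      have hqd : q * d₁ = s := by linear_combination e3
      have hev2' : p * S.f x z + q * (d₁ * S.f z x) = 0 := by
        have hh1 : S.f x (y + z) = S.f x z := by rw [map_add, hxy2, zero_add]
        have hh2 : S.f (y + z) x = d₁ * S.f z x := by
          rw [show S.f (y + z) x = c₁ * S.f y x + d₁ * S.f z x from by
              rw [hfv]; simp [smul_eq_mul], hyx2]
          ring
        rw [hh1, hh2] at hev2
        exact hev2
      have hev3' : r * (a * S.f x z + b * S.f y z) + s * (S.f z x + S.f z y) = 0 := by
        rw [hfwz, hfzw] at hev3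
        exact hev3
      have hS1 : r * a * S.f x z + s * S.f z x = 0 := by
        linear_combination hev2' - S.f x z * hpa - S.f z x * hqd
      have hS2 : r * b * S.f y z + s * S.f z y = 0 := by
        linear_combination hev3' - hS1
      have hkey : s * (a * (S.f z y * S.f x z)) = s * (b * (S.f z x * S.f y z)) := by
        linear_combination (a * S.f x z) * hS2 - (b * S.f y z) * hS1
      exact mul_left_cancel₀ hs hkey
    · have hfyx := S.symm_ne hxy2
      have co := S.cocycle hxy2 hz2 hzx
      have key : S.f y x * (a * (S.f z y * S.f x z)) =
          S.f y x * (b * (S.f z x * S.f y z)) := by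
        linear_combination a * co - (S.f y z * S.f z x) * heval
      exact mul_left_cancel₀ hfyx key
  have hzwsum : S.f z x + S.f z y ≠ 0 := by rw [← hfzw]; exact hzw
  have hTw := S.skew e he hxy0 hz0
  rw [hfwz, hfzw] at hTw
  have hTw' : S.mu e he (x + y) * (a * S.f x z + b * S.f y z)
      + S.mu e he z * (S.f z x + S.f z y) = 0 := by linear_combination hTw
  have hD : S.mu e he (x + y) * a * S.f x z + S.mu e he z * S.f z x = 0 := by
    have hDD : (S.mu e he (x + y) * a * S.f x z + S.mu e he z * S.f z x)
        * (S.f z x + S.f z y) = 0 := by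
      linear_combination S.f z x * hTw' + S.mu e he (x + y) * hE
    exact (mul_eq_zero.mp hDD).resolve_right hzwsum
  constructor
  · have hTx := S.skew e he hx hz0
    have hcan : S.mu e he (x + y) * a * S.f x z = S.mu e he x * S.f x z := by
      linear_combination hD - hTx
    exact mul_right_cancel₀ hz1 hcan
  · have hTy := S.skew e he hy hz0
    have hcan : S.mu e he (x + y) * b * S.f y z = S.mu e he y * S.f y z := by
      linear_combination hTw' - hD - hTy
    exact mul_right_cancel₀ hz2 hcan

end NS
namespace NS

variable {F V : Type*} [Field F] [AddCommGroup V] [Module F V] (S : NS F V)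

theorem exists_form (e : V) (he : e ≠ 0) :
    ∃ Ω : V → V →ₗ[F] F, Ω 0 = 0 ∧ (∀ x y, Ω (x + y) = Ω x + Ω y) ∧
      (∀ (a : F) (x : V), Ω (a • x) = a • Ω x) ∧
      (∀ x, x ≠ 0 → ∃ c : F, c ≠ 0 ∧ Ω x = c • S.f x) := by
  refine ⟨fun x => S.mu e he x • S.f x, ?_, ?_, ?_, ?_⟩
  · simp [S.mu_zero, S.f_zero]
  · intro x y
    by_cases hx : x = 0
    · subst hx; simp [S.mu_zero, S.f_zero]
    by_cases hy : y = 0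
    · subst hy; simp [S.mu_zero, S.f_zero]
    by_cases hxy0 : x + y = 0
    · have hyx : y = -x := by
        rw [eq_neg_iff_add_eq_zero, add_comm]; exact hxy0
      subst hyx
      rw [add_neg_cancel]
      have h1 : (-x : V) = (-1 : F) • x := by module
      show S.mu e he 0 • S.f 0 = S.mu e he x • S.f x + S.mu e he (-x) • S.f (-x)
      rw [h1, S.mu_smul e he (by norm_num : (-1:F) ≠ 0) hx,
        S.fsmul (-1 : F) x (by norm_num), S.mu_zero, S.f_zero, ← add_smul]
      simp
    · exact S.add_mu e he hx hy hxy0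
  · intro a x
    by_cases ha : a = 0
    · subst ha; simp [S.mu_zero, S.f_zero]
    by_cases hx : x = 0
    · subst hx; simp [S.mu_zero, S.f_zero]
    · show S.mu e he (a • x) • S.f (a • x) = a • S.mu e he x • S.f x
      rw [S.mu_smul e he ha hx, S.fsmul a x ha, mul_smul]
  · intro x hx
    exact ⟨S.mu e he x, S.mu_ne e he hx, rfl⟩

end NS
namespace Stmt3Aux

variable {F V : Type*} [Field F] [AddCommGroup V] [Module F V] [FiniteDimensional F V]

theorem exists_ker_eq (W : Submodule F V) (h : finrank F W + 1 = finrank F V) :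
    ∃ φ : V →ₗ[F] F, LinearMap.ker φ = W := by
  have hq : finrank F (V ⧸ W) = 1 := by
    have := W.finrank_quotient_add_finrank
    omega
  let b : Basis (Fin 1) F (V ⧸ W) := Module.finBasisOfFinrankEq F (V ⧸ W) hq
  refine ⟨(b.coord 0).comp W.mkQ, ?_⟩
  ext v
  simp only [LinearMap.mem_ker, LinearMap.comp_apply]
  constructor
  · intro hv
    have hz : W.mkQ v = 0 := by
      have hrep := b.sum_repr (W.mkQ v)
      rw [Fin.sum_univ_one] at hrep
      have h00 : b.repr (W.mkQ v) 0 = 0 := by simpa [Basis.coord_apply] using hv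
      rw [← hrep, h00, zero_smul]
    simpa [Submodule.mkQ_apply, Submodule.Quotient.mk_eq_zero] using hz
  · intro hv
    have hz : W.mkQ v = 0 := by
      simpa [Submodule.mkQ_apply, Submodule.Quotient.mk_eq_zero] using hv
    rw [hz, map_zero]

theorem finrank_span_pair {x y : V} (hx : x ≠ 0) (h : ∀ c : F, y ≠ c • x) :
    finrank F ((span F {x} ⊔ span F {y} : Submodule F V) : Submodule F V) = 2 := by
  have hy : y ≠ 0 := fun h0 => h 0 (by rw [h0, zero_smul])
  have hinf : (span F {x} : Submodule F V) ⊓ span F {y} = ⊥ := by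
    rw [eq_bot_iff]
    intro v hv
    obtain ⟨hv1, hv2⟩ := Submodule.mem_inf.mp hv
    obtain ⟨a, ha⟩ := Submodule.mem_span_singleton.mp hv1
    obtain ⟨b, hb⟩ := Submodule.mem_span_singleton.mp hv2
    rcases eq_or_ne b 0 with rfl | hb0
    · rw [Submodule.mem_bot, ← hb, zero_smul]
    · exfalso
      refine h (b⁻¹ * a) ?_
      rw [mul_smul, ha, ← hb, smul_smul, inv_mul_cancel₀ hb0, one_smul]
  have hsum := Submodule.finrank_sup_add_finrank_inf_eq (span F {x}) (span F {y})
  rw [hinf, finrank_bot, finrank_span_singleton hx, finrank_span_singleton hy] at hsum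
  omega

theorem exists_ns (n : ℕ) (hn : finrank F V = n) (hn4 : 4 ≤ n)
    (X : Set (Submodule F V))
    (hS : ∀ s : Submodule F V, finrank F s = 1 →
      ∃ t : Submodule F V, finrank F t = n - 1 ∧ s ≤ t ∧
        ∀ l : Submodule F V, finrank F l = 2 →
          ((l ∈ X ∧ s ≤ l) ↔ (s ≤ l ∧ l ≤ t))) :
    ∃ S : NS F V, ∀ x : V, x ≠ 0 → ∀ l : Submodule F V, finrank F l = 2 →
      ((l ∈ X ∧ span F {x} ≤ l) ↔ (span F {x} ≤ l ∧ l ≤ LinearMap.ker (S.f x))) := by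
  choose t ht using hS
  have ht1 : ∀ (s : Submodule F V) (hs : finrank F s = 1), finrank F (t s hs) = n - 1 :=
    fun s hs => (ht s hs).1
  have ht2 : ∀ (s : Submodule F V) (hs : finrank F s = 1), s ≤ t s hs :=
    fun s hs => (ht s hs).2.1
  have ht3 : ∀ (s : Submodule F V) (hs : finrank F s = 1), ∀ l : Submodule F V,
      finrank F l = 2 → ((l ∈ X ∧ s ≤ l) ↔ (s ≤ l ∧ l ≤ t s hs)) :=
    fun s hs => (ht s hs).2.2
  have hΦex : ∀ W : Submodule F V, finrank F W = n - 1 →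
      ∃ φ : V →ₗ[F] F, LinearMap.ker φ = W := by
    intro W hW
    apply exists_ker_eq
    rw [hW, hn]; omega
  choose Φ hΦ using hΦex
  classical
  set T : Submodule F V → Submodule F V :=
    fun s => if hs : finrank F s = 1 then t s hs else ⊤ with hTdef
  set g : Submodule F V → (V →ₗ[F] F) :=
    fun W => if hW : finrank F W = n - 1 then Φ W hW else 0 with hgdef
  set f : V → V →ₗ[F] F := fun x => g (T (span F {x})) with hfdef
  have hTx : ∀ (x : V) (hx : x ≠ 0),
      T (span F {x}) = t (span F {x}) (finrank_span_singleton hx) := by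
    intro x hx
    rw [hTdef]
    exact dif_pos (finrank_span_singleton hx)
  have hrkT : ∀ (x : V) (hx : x ≠ 0), finrank F (T (span F {x})) = n - 1 := by
    intro x hx
    rw [hTx x hx]
    exact ht1 _ _
  have hkerf : ∀ (x : V) (hx : x ≠ 0), LinearMap.ker (f x) = T (span F {x}) := by
    intro x hx
    rw [hfdef, hgdef]
    simp only
    rw [dif_pos (hrkT x hx)]
    exact hΦ _ (hrkT x hx)
  have hf0 : f 0 = 0 := by
    rw [hfdef]
    simp only
    have h1 : (span F {(0 : V)} : Submodule F V) = ⊥ := Submodule.span_zero_singleton F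
    rw [h1, hTdef]
    simp only
    rw [dif_neg (by rw [finrank_bot]; omega : ¬ finrank F (⊥ : Submodule F V) = 1)]
    rw [hgdef]
    simp only
    rw [dif_neg (by rw [finrank_top, hn]; omega : ¬ finrank F (⊤ : Submodule F V) = n - 1)]
  have hself : ∀ x : V, f x x = 0 := by
    intro x
    by_cases hx : x = 0
    · subst hx; rw [hf0]; rfl
    · have hmem : x ∈ LinearMap.ker (f x) := by
        rw [hkerf x hx, hTx x hx]
        exact ht2 _ _ (Submodule.mem_span_singleton_self x)
      exact LinearMap.mem_ker.mp hmem
  have hfne : ∀ x : V, x ≠ 0 → f x ≠ 0 := by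
    intro x hx h0
    have hker : LinearMap.ker (f x) = ⊤ := by rw [h0]; exact LinearMap.ker_zero
    have := hrkT x hx
    rw [← hkerf x hx, hker, finrank_top, hn] at this
    omega
  have hfsmul : ∀ (a : F) (x : V), a ≠ 0 → f (a • x) = f x := by
    intro a x ha
    rw [hfdef]
    simp only
    rw [Submodule.span_singleton_smul_eq (IsUnit.mk0 a ha) x]
  have hsymm : ∀ x y : V, f x y = 0 → f y x = 0 := by
    intro x y hxy
    by_cases hx : x = 0
    · subst hx; exact map_zero _
    by_cases hy : y = 0
    · subst hy; rw [hf0]; rfl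
    have hyT : y ∈ t (span F {x}) (finrank_span_singleton hx) := by
      rw [← hTx x hx, ← hkerf x hx]
      exact LinearMap.mem_ker.mpr hxy
    by_cases hdep : ∃ c : F, y = c • x
    · obtain ⟨c, rfl⟩ := hdep
      have hc : c ≠ 0 := fun h => hy (by rw [h, zero_smul])
      rw [hfsmul c x hc]
      exact hself x
    · have hdep' : ∀ c : F, y ≠ c • x := by push_neg at hdep; exact hdep
      have hl2 : finrank F ((span F {x} ⊔ span F {y} : Submodule F V)) = 2 :=
        finrank_span_pair hx hdep'
      have hsx : (span F {x} : Submodule F V) ≤ span F {x} ⊔ span F {y} := le_sup_left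
      have hsy : (span F {y} : Submodule F V) ≤ span F {x} ⊔ span F {y} := le_sup_right
      have hlt : (span F {x} ⊔ span F {y} : Submodule F V) ≤
          t (span F {x}) (finrank_span_singleton hx) := by
        apply sup_le
        · exact ht2 _ _
        · rw [Submodule.span_singleton_le_iff_mem]; exact hyT
      have hX1 : (span F {x} ⊔ span F {y} : Submodule F V) ∈ X :=
        ((ht3 (span F {x}) _ _ hl2).mpr ⟨hsx, hlt⟩).1
      have hx_in : x ∈ t (span F {y}) (finrank_span_singleton hy) := by
        have hiff := (ht3 (span F {y}) (finrank_span_singleton hy) _ hl2).mp ⟨hX1, hsy⟩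
        exact hiff.2 (hsx (Submodule.mem_span_singleton_self x))
      have : x ∈ LinearMap.ker (f y) := by
        rw [hkerf y hy, hTx y hy]
        exact hx_in
      exact LinearMap.mem_ker.mp this
  have haddker : ∀ x y z : V, f x z = 0 → f y z = 0 → f (x + y) z = 0 := by
    intro x y z h1 h2
    have h1' := hsymm x z h1
    have h2' := hsymm y z h2
    have hz : f z (x + y) = 0 := by rw [map_add, h1', h2', add_zero]
    exact hsymm z (x + y) hz
  have hinj : ∀ x y : V, x ≠ 0 → y ≠ 0 →
      LinearMap.ker (f x) = LinearMap.ker (f y) → ∃ c : F, x = c • y := by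
    intro x y hx hy hk
    by_contra hc
    push_neg at hc
    have hc' : ∀ c : F, y ≠ c • x := by
      intro c h
      have hc0 : c ≠ 0 := by rintro rfl; rw [zero_smul] at h; exact hy h
      exact hc c⁻¹ (by rw [h, smul_smul, inv_mul_cancel₀ hc0, one_smul])
    have hrankH : finrank F (LinearMap.ker (f x)) = n - 1 := by
      rw [hkerf x hx]; exact hrkT x hx
    have hHne : LinearMap.ker (f x) ≠ ⊤ := by
      intro h
      rw [h, finrank_top, hn] at hrankH; omega
    obtain ⟨w, hw⟩ := exists_notMem_top hHne
    have hw0 : w ≠ 0 := fun h => hw (by rw [h]; exact Submodule.zero_mem _)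
    have hP2 : finrank F ((span F {x} ⊔ span F {y} : Submodule F V)) = 2 :=
      finrank_span_pair hx hc'
    have hrankKw : finrank F (LinearMap.ker (f w)) = n - 1 := by
      rw [hkerf w hw0]; exact hrkT w hw0
    have hinf : (span F {x} ⊔ span F {y} : Submodule F V) ⊓ LinearMap.ker (f w) ≠ ⊥ := by
      intro hbot
      have hsum := Submodule.finrank_sup_add_finrank_inf_eq
        (span F {x} ⊔ span F {y} : Submodule F V) (LinearMap.ker (f w))
      rw [hbot, finrank_bot, hP2, hrankKw] at hsum
      have hle : finrank F ((span F {x} ⊔ span F {y} : Submodule F V)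
          ⊔ LinearMap.ker (f w) : Submodule F V) ≤ n := by
        rw [← hn]; exact Submodule.finrank_le _
      omega
    obtain ⟨u, hu, hu0⟩ := Submodule.exists_mem_ne_zero_of_ne_bot hinf
    obtain ⟨huP, huK⟩ := Submodule.mem_inf.mp hu
    obtain ⟨v1, hv1, v2, hv2, huv⟩ := Submodule.mem_sup.mp huP
    obtain ⟨a, ha⟩ := Submodule.mem_span_singleton.mp hv1
    obtain ⟨b, hb⟩ := Submodule.mem_span_singleton.mp hv2
    have hudecomp : u = a • x + b • y := by rw [ha, hb, huv]
    have hkle : LinearMap.ker (f x) ≤ LinearMap.ker (f u) := by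
      intro v hv
      have hv1' : f x v = 0 := LinearMap.mem_ker.mp hv
      have hv2' : f y v = 0 := by
        rw [hk] at hv
        exact LinearMap.mem_ker.mp hv
      have hs1 := hsymm x v hv1'
      have hs2 := hsymm y v hv2'
      have hvu : f v u = 0 := by
        rw [hudecomp, map_add, map_smul, map_smul, hs1, hs2, smul_zero, smul_zero,
          add_zero]
      exact LinearMap.mem_ker.mpr (hsymm v u hvu)
    have hku : finrank F (LinearMap.ker (f u)) = n - 1 := by
      rw [hkerf u hu0]; exact hrkT u hu0
    have hkeq : LinearMap.ker (f x) = LinearMap.ker (f u) :=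
      Submodule.eq_of_le_of_finrank_eq hkle (by rw [hrankH, hku])
    have hwu : f w u = 0 := LinearMap.mem_ker.mp huK
    have hwmem : w ∈ LinearMap.ker (f u) := LinearMap.mem_ker.mpr (hsymm w u hwu)
    rw [← hkeq] at hwmem
    exact hw hwmem
  refine ⟨⟨f, hf0, hfne, hself, hsymm, hfsmul, haddker, hinj⟩, ?_⟩
  intro x hx l hl
  show (l ∈ X ∧ span F {x} ≤ l) ↔ (span F {x} ≤ l ∧ l ≤ LinearMap.ker (f x))
  rw [hkerf x hx, hTx x hx]
  exact ht3 (span F {x}) _ l hl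

end Stmt3Aux
theorem stmt_3 {F V : Type*} [Field F] [AddCommGroup V] [Module F V]
    [FiniteDimensional F V] (n : ℕ) (hn : Module.finrank F V = n)
    (heven : Even n) (hn4 : 4 ≤ n)
    (X : Set (Submodule F V)) (hX : ∀ l ∈ X, Module.finrank F l = 2)
    -- `X` satisfies condition `S` for `k = 2`
    (hS : ∀ s : Submodule F V, Module.finrank F s = 1 →
      ∃ t : Submodule F V, Module.finrank F t = n - 1 ∧ s ≤ t ∧
        ∀ l : Submodule F V, Module.finrank F l = 2 →
          ((l ∈ X ∧ s ≤ l) ↔ (s ≤ l ∧ l ≤ t))) :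
    ∃ (σ : F ≃+* F) (Ω : V → V → F),
      (∀ x₁ x₂ y : V, Ω (x₁ + x₂) y = Ω x₁ y + Ω x₂ y) ∧
      (∀ x y₁ y₂ : V, Ω x (y₁ + y₂) = Ω x y₁ + Ω x y₂) ∧
      (∀ (a : F) (x y : V), Ω (a • x) y = σ a * Ω x y) ∧
      (∀ (a : F) (x y : V), Ω x (a • y) = σ a * Ω x y) ∧
      (∀ x : V, (∀ y : V, Ω x y = 0) → x = 0) ∧
      (∀ y : V, (∀ x : V, Ω x y = 0) → y = 0) ∧
      (∀ x : V, Ω x x = 0) ∧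
      X = {l : Submodule F V | Module.finrank F l = 2 ∧
            ∃ x ∈ l, x ≠ 0 ∧ ∀ y ∈ l, Ω x y = 0} := by
  obtain ⟨S, hbridge⟩ := Stmt3Aux.exists_ns n hn hn4 X hS
  haveI : Nontrivial V := Module.nontrivial_of_finrank_pos
    (by rw [hn]; omega : 0 < Module.finrank F V)
  obtain ⟨e, he⟩ := exists_ne (0 : V)
  obtain ⟨Ω, hΩ0, hadd, hsmul, hcf⟩ := S.exists_form e he
  have halt : ∀ x : V, Ω x x = 0 := by
    intro x
    by_cases hx : x = 0
    · subst hx; rw [hΩ0]; rfl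
    · obtain ⟨c, hc0, hcfx⟩ := hcf x hx
      rw [hcfx]
      simp [S.self x]
  have hanti : ∀ x y : V, Ω x y = -(Ω y x) := by
    intro x y
    have h0 : Ω (x + y) (x + y) = 0 := halt _
    rw [hadd] at h0
    simp only [LinearMap.add_apply, map_add] at h0
    rw [halt x, halt y] at h0
    linear_combination h0
  have hnd : ∀ x : V, x ≠ 0 → ¬(∀ y : V, Ω x y = 0) := by
    intro x hx hx0
    obtain ⟨c, hc0, hcfx⟩ := hcf x hx
    apply S.f_ne x hx
    ext y
    have h1 := hx0 y
    rw [hcfx] at h1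
    simp only [LinearMap.smul_apply, smul_eq_mul] at h1
    have h2 := (mul_eq_zero.mp h1).resolve_left hc0
    simpa using h2
  refine ⟨RingEquiv.refl F, fun x y => Ω x y, ?_, ?_, ?_, ?_, ?_, ?_, ?_, ?_⟩
  · intro x₁ x₂ y
    show Ω (x₁ + x₂) y = Ω x₁ y + Ω x₂ y
    rw [hadd x₁ x₂]
    rfl
  · intro x y₁ y₂
    exact (Ω x).map_add y₁ y₂
  · intro a x y
    show Ω (a • x) y = (RingEquiv.refl F) a * Ω x y
    rw [hsmul a x]
    simp
  · intro a x y
    show Ω x (a • y) = (RingEquiv.refl F) a * Ω x y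
    rw [(Ω x).map_smul]
    simp
  · intro x hx0
    by_contra hx
    exact hnd x hx hx0
  · intro y hy0
    by_contra hy
    refine hnd y hy ?_
    intro x
    have h1 : Ω x y = 0 := hy0 x
    rw [hanti y x, h1, neg_zero]
  · exact halt
  · ext l
    simp only [Set.mem_setOf_eq]
    constructor
    · intro hlX
      have hl2 := hX l hlX
      refine ⟨hl2, ?_⟩
      have hlbot : l ≠ ⊥ := by
        intro h
        rw [h, finrank_bot] at hl2
        omega
      obtain ⟨x, hxl, hx0⟩ := Submodule.exists_mem_ne_zero_of_ne_bot hlbot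
      refine ⟨x, hxl, hx0, ?_⟩
      intro y hyl
      have hsle : Submodule.span F {x} ≤ l := (Submodule.span_singleton_le_iff_mem x l).mpr hxl
      have hker := ((hbridge x hx0 l hl2).mp ⟨hlX, hsle⟩).2
      have hfxy : S.f x y = 0 := LinearMap.mem_ker.mp (hker hyl)
      obtain ⟨c, hc0, hcfx⟩ := hcf x hx0
      show Ω x y = 0
      rw [hcfx]
      simp [hfxy]
    · rintro ⟨hl2, x, hxl, hx0, hperp⟩
      have hsle : Submodule.span F {x} ≤ l := (Submodule.span_singleton_le_iff_mem x l).mpr hxl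
      obtain ⟨c, hc0, hcfx⟩ := hcf x hx0
      have hker : l ≤ LinearMap.ker (S.f x) := by
        intro y hyl
        have h1 : Ω x y = 0 := hperp y hyl
        rw [hcfx] at h1
        simp only [LinearMap.smul_apply, smul_eq_mul] at h1
        exact LinearMap.mem_ker.mpr ((mul_eq_zero.mp h1).resolve_left hc0)
      exact ((hbridge x hx0 l hl2).mpr ⟨hsle, hker⟩).1
end

section
/- Let Ω₁ and Ω₂ be two nondegenerate bilinear forms on a finite-dimensional F-vector space V. Then the composition of the orthogonal-complement maps, s ↦ (s^⊥_{Ω₁})^⊥_{Ω₂}, is induced by a linear automorphism of V: there exists a linear automorphism h of V such that (s^⊥_{Ω₁})^⊥_{Ω₂} = h(s) for every subspace s of V. -/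
open Module

lemma orth_eq_dualCoann {F V : Type*} [Field F] [AddCommGroup V] [Module F V]
    (B : LinearMap.BilinForm F V) (W : Submodule F V) :
    B.orthogonal W = (W.map B).dualCoannihilator := by
  ext y
  simp [LinearMap.BilinForm.mem_orthogonal_iff, Submodule.mem_dualCoannihilator,
    Submodule.mem_map, LinearMap.BilinForm.IsOrtho]

lemma finrank_orth {F V : Type*} [Field F] [AddCommGroup V] [Module F V]
    [FiniteDimensional F V] (B : LinearMap.BilinForm F V) (hB : B.Nondegenerate)
    (W : Submodule F V) :
    finrank F (B.orthogonal W) = finrank F V - finrank F W := by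
  rw [orth_eq_dualCoann]
  have h1 : finrank F (W.map B) = finrank F W := by
    rw [show W.map B
        = W.map ((B.toDual hB : V ≃ₗ[F] Module.Dual F V) : V →ₗ[F] Module.Dual F V) from rfl,
      LinearEquiv.finrank_map_eq]
  have h2 := Subspace.finrank_add_finrank_dualCoannihilator_eq (W.map B)
  have h3 : finrank F (Module.Dual F V) = finrank F V := Subspace.dual_finrank_eq
  have h4 : finrank F W ≤ finrank F V := W.finrank_le
  rw [← h2, h1]
  omega

theorem stmt_11 {F V : Type*} [Field F] [AddCommGroup V] [Module F V]
    [FiniteDimensional F V]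
    (Ω₁ Ω₂ : LinearMap.BilinForm F V)
    (hnd₁ : Ω₁.Nondegenerate) (hnd₂ : Ω₂.Nondegenerate) :
    ∃ h : V ≃ₗ[F] V, ∀ s : Submodule F V,
      Ω₂.orthogonal (Ω₁.orthogonal s) = s.map (h : V →ₗ[F] V) := by
  set e : V ≃ₗ[F] V := (Ω₁.toDual hnd₁).trans (Ω₂.flip.toDual hnd₂.flip).symm with he
  refine ⟨e, fun s => ?_⟩
  have key : ∀ z x : V, Ω₂ z ((e : V →ₗ[F] V) x) = Ω₁ x z := by
    intro z x
    show Ω₂.flip ((Ω₂.flip.toDual hnd₂.flip).symm (Ω₁.toDual hnd₁ x)) z = Ω₁ x z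
    exact LinearMap.BilinForm.apply_toDual_symm_apply _ _
  have hle : s.map (e : V →ₗ[F] V) ≤ Ω₂.orthogonal (Ω₁.orthogonal s) := by
    rintro _ ⟨x, hx, rfl⟩
    rw [LinearMap.BilinForm.mem_orthogonal_iff]
    intro z hz
    have h0 := (LinearMap.BilinForm.mem_orthogonal_iff.mp hz) x hx
    show Ω₂ z ((e : V →ₗ[F] V) x) = 0
    rw [key z x]
    exact h0
  refine (Submodule.eq_of_le_of_finrank_le hle ?_).symm
  rw [finrank_orth Ω₂ hnd₂, finrank_orth Ω₁ hnd₁, LinearEquiv.finrank_map_eq]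
  have : finrank F s ≤ finrank F V := s.finrank_le
  omega
end

section
/- Let V be an n-dimensional F-vector space and let X be a set of (n-2)-dimensional subspaces of V satisfying condition S, witnessed by a map F assigning to each hyperplane s of V a 1-dimensional subspace F(s) ⊆ s such that the members of X contained in s are exactly the (n-2)-dimensional subspaces l with F(s) ⊆ l ⊆ s. Then for any two hyperplanes s₁ and s₂ of V, F(s₁) ⊆ s₂ holds if and only if F(s₂) ⊆ s₁. -/
theorem stmt_14 {F V : Type*} [Field F] [AddCommGroup V] [Module F V]
    [FiniteDimensional F V] (n : ℕ) (hn : Module.finrank F V = n)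
    (X : Set (Submodule F V)) (hX : ∀ l ∈ X, Module.finrank F l = n - 2)
    (Fmap : Submodule F V → Submodule F V)
    (hFdim : ∀ s : Submodule F V, Module.finrank F s = n - 1 →
      Module.finrank F (Fmap s) = 1)
    (hFle : ∀ s : Submodule F V, Module.finrank F s = n - 1 → Fmap s ≤ s)
    (hFcond : ∀ s : Submodule F V, Module.finrank F s = n - 1 →
      ∀ l : Submodule F V, Module.finrank F l = n - 2 →
        ((l ∈ X ∧ l ≤ s) ↔ (Fmap s ≤ l ∧ l ≤ s)))
    (s₁ s₂ : Submodule F V)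
    (h₁ : Module.finrank F s₁ = n - 1) (h₂ : Module.finrank F s₂ = n - 1) :
    Fmap s₁ ≤ s₂ ↔ Fmap s₂ ≤ s₁ := by
  have key : ∀ t₁ t₂ : Submodule F V, Module.finrank F t₁ = n - 1 →
      Module.finrank F t₂ = n - 1 → Fmap t₁ ≤ t₂ → Fmap t₂ ≤ t₁ := by
    intro t₁ t₂ k₁ k₂ hle
    by_cases heq : t₁ = t₂
    · subst heq; exact hFle t₁ k₁
    have hn2 : 2 ≤ n := by
      by_contra h
      have hz : Module.finrank F t₁ = 0 := by omega
      have hd1 : Module.finrank F (Fmap t₁) = 1 := hFdim t₁ k₁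
      have := Submodule.finrank_mono (hFle t₁ k₁)
      omega
    -- t₁ ⊔ t₂ has finrank n
    have hlt : t₁ < t₁ ⊔ t₂ := by
      refine lt_of_le_of_ne le_sup_left ?_
      intro hEq
      have ht2le : t₂ ≤ t₁ := by
        rw [hEq]; exact le_sup_right
      exact heq (Submodule.eq_of_le_of_finrank_eq ht2le (by omega)).symm
    have hsup_le : Module.finrank F ↥(t₁ ⊔ t₂) ≤ n := by
      rw [← hn]; exact Submodule.finrank_le _
    have hsup_gt : Module.finrank F ↥t₁ < Module.finrank F ↥(t₁ ⊔ t₂) :=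
      Submodule.finrank_lt_finrank_of_lt hlt
    have hsup : Module.finrank F ↥(t₁ ⊔ t₂) = n := by omega
    have hsum := Submodule.finrank_sup_add_finrank_inf_eq t₁ t₂
    have hinf : Module.finrank F ↥(t₁ ⊓ t₂) = n - 2 := by omega
    have hF1le : Fmap t₁ ≤ t₁ ⊓ t₂ := le_inf (hFle t₁ k₁) hle
    have hmem : t₁ ⊓ t₂ ∈ X :=
      ((hFcond t₁ k₁ (t₁ ⊓ t₂) hinf).mpr ⟨hF1le, inf_le_left⟩).1
    have hF2le : Fmap t₂ ≤ t₁ ⊓ t₂ :=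
      ((hFcond t₂ k₂ (t₁ ⊓ t₂) hinf).mp ⟨hmem, inf_le_right⟩).1
    exact hF2le.trans inf_le_left
  exact ⟨key s₁ s₂ h₁ h₂, key s₂ s₁ h₂ h₁⟩
end

section
/- Let Ω be a nondegenerate bilinear form on a finite-dimensional F-vector space V such that every hyperplane s of V contains its Ω-orthogonal complement, i.e. s^⊥_Ω ⊆ s for every subspace s of dimension n-1. Then Ω is symplectic: Ω(x,x) = 0 for all x ∈ V. -/
theorem stmt_15 {F V : Type*} [Field F] [AddCommGroup V] [Module F V]
    [FiniteDimensional F V] (n : ℕ) (hn : Module.finrank F V = n)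
    (Ω : LinearMap.BilinForm F V) (hnd : Ω.Nondegenerate)
    (hhyp : ∀ s : Submodule F V, Module.finrank F s = n - 1 →
      Ω.orthogonal s ≤ s) :
    Ω.IsAlt := by
  intro x
  by_contra h
  set f : V →ₗ[F] F := Ω.flip x with hf
  have hfx : f x ≠ 0 := h
  have hfne : f ≠ 0 := fun h0 => hfx (by rw [h0]; rfl)
  have hrange : Module.finrank F (LinearMap.range f) = 1 := by
    rw [LinearMap.range_eq_top.mpr (LinearMap.surjective_of_ne_zero hfne)]
    simp
  have hker : Module.finrank F (LinearMap.ker f) = n - 1 := by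
    have := LinearMap.finrank_range_add_finrank_ker f
    omega
  have hx : x ∈ Ω.orthogonal (LinearMap.ker f) := by
    intro z hz
    exact hz
  have := hhyp (LinearMap.ker f) hker hx
  exact hfx this
end

section
/- Let Ω be a reflexive nondegenerate bilinear form on a finite-dimensional F-vector space V, and let f be a map from the set of 1-dimensional subspaces of V to itself such that: (1') for every 1-dimensional subspace l, the subspaces l and f(l) are Ω-orthogonal (Ω(x,y) = 0 for all x ∈ l, y ∈ f(l)); and (2') for any two 1-dimensional subspaces t₁, t₂, the subspaces t₁ and f(t₂) are Ω-orthogonal if and only if t₂ and f(t₁) are Ω-orthogonal. Then f is a bijection of the set of 1-dimensional subspaces of V onto itself. -/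
/-!
For a nonzero vector `u` let `φ u = Ω(·, w)`, where `w` spans `f (F ∙ u)`; by nondegeneracy this
is a nonzero functional, determined up to a scalar by the line of `u`, and (2') says exactly that
`φ u v = 0 ↔ φ v u = 0`. Any such symmetric family of functionals induces a bijection from
lines to hyperplanes. Surjectivity: a hyperplane spanned by `b₁, …, bₙ₋₁` lies in `ker (φ z)` for
any nonzero `z ∈ ⋂ ker (φ bᵢ)`. Injectivity: if `ker (φ a) ≤ ker (φ b)`, then `b` lies in
`E = ⋂_{x ∈ ker (φ a)} ker (φ x)`, which meets the hyperplane `ker (φ u)`, `φ a u ≠ 0`, only in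
`0`, so `E = F ∙ a`. Since `Ω` is reflexive and nondegenerate, `Ω.flip` is such a family too, so
lines `m` are also determined by the hyperplanes `ker (Ω.flip w)`, `w ∈ m`.
-/

open Module Submodule LinearMap

theorem forall_mem_span_singleton_apply_eq_zero_iff {R M N P : Type*} [CommSemiring R]
    [AddCommMonoid M] [AddCommMonoid N] [AddCommMonoid P] [Module R M] [Module R N] [Module R P]
    (B : M →ₗ[R] N →ₗ[R] P) (a : M) (b : N) :
    (∀ x ∈ R ∙ a, ∀ y ∈ R ∙ b, B x y = 0) ↔ B a b = 0 := by
  refine ⟨fun h => h a (mem_span_singleton_self a) b (mem_span_singleton_self b), ?_⟩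
  rintro h _ hx _ hy
  obtain ⟨c, rfl⟩ := mem_span_singleton.1 hx
  obtain ⟨d, rfl⟩ := mem_span_singleton.1 hy
  simp [h]

theorem LinearMap.BilinForm.Nondegenerate.flip_ne_zero {R M : Type*} [CommSemiring R]
    [AddCommMonoid M] [Module R M] {Ω : LinearMap.BilinForm R M} (hnd : Ω.Nondegenerate) {x : M}
    (hx : x ≠ 0) : Ω.flip x ≠ 0 :=
  fun h => hx (hnd.2 x fun v => LinearMap.congr_fun h v)

section Polarity

variable {F V : Type*} [Field F] [AddCommGroup V] [Module F V] {φ : V → Module.Dual F V}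

theorem exists_ne_zero_le_ker_of_ne_top [FiniteDimensional F V]
    (hφ : ∀ u v, φ u v = 0 ↔ φ v u = 0) {W : Submodule F V} (hW : W ≠ ⊤) :
    ∃ z ≠ 0, W ≤ ker (φ z) := by
  let b := Module.finBasis F W
  let Φ : V →ₗ[F] Fin (finrank F W) → F := LinearMap.pi fun i => φ (b i)
  have hΦ : ker Φ ≠ ⊥ := ker_ne_bot_of_finrank_lt (by simpa using finrank_lt hW)
  obtain ⟨z, hzΦ, hz⟩ := (Submodule.ne_bot_iff _).1 hΦ
  refine ⟨z, hz, fun v hv => ?_⟩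
  have hrestrict : (φ z).domRestrict W = 0 :=
    b.ext fun i => (hφ z _).2 (congrFun (mem_ker.1 hzΦ) i)
  exact LinearMap.congr_fun hrestrict ⟨v, hv⟩

theorem mem_span_singleton_of_ker_le_ker (hφ : ∀ u v, φ u v = 0 ↔ φ v u = 0)
    (hφ₀ : ∀ u ≠ 0, φ u ≠ 0) {a b : V} (ha : a ≠ 0) (hab : ker (φ a) ≤ ker (φ b)) :
    b ∈ F ∙ a := by
  set E : Submodule F V := ⨅ x ∈ ker (φ a), ker (φ x)
  have mem_E {c : V} : c ∈ E ↔ ker (φ a) ≤ ker (φ c) := by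
    simp [E, SetLike.le_def, hφ]
  obtain ⟨u, hu⟩ : ∃ u, φ a u ≠ 0 := not_forall.1 fun h => hφ₀ a ha (LinearMap.ext h)
  have hE : ker (φ u) ⊓ E = ⊥ := by
    refine eq_bot_iff.2 fun c ⟨hcu, hcE⟩ => (Submodule.mem_bot F).2 ?_
    by_contra hc
    refine hφ₀ c hc (ker_eq_top.1 (eq_top_iff.2 ?_))
    rw [← span_singleton_sup_ker_eq_top (φ a) hu]
    exact sup_le (span_singleton_le_iff_mem _ _ |>.2 ((hφ c u).2 hcu)) (mem_E.1 hcE)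
  have haE : F ∙ a ≤ E := (span_singleton_le_iff_mem _ _).2 (mem_E.2 le_rfl)
  have hEa : E = F ∙ a := by
    calc E = ((F ∙ a) ⊔ ker (φ u)) ⊓ E := by
          rw [span_singleton_sup_ker_eq_top _ (mt (hφ a u).2 hu), top_inf_eq]
      _ = F ∙ a := by rw [sup_inf_assoc_of_le _ haE, hE, sup_bot_eq]
  exact hEa ▸ mem_E.2 hab

theorem mem_span_singleton_of_ker_flip_le_ker_flip {Ω : LinearMap.BilinForm F V}
    (hnd : Ω.Nondegenerate) (hrefl : ∀ x y : V, Ω x y = 0 ↔ Ω y x = 0) {a b : V} (ha : a ≠ 0)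
    (hab : ker (Ω.flip a) ≤ ker (Ω.flip b)) : b ∈ F ∙ a :=
  mem_span_singleton_of_ker_le_ker (fun u v => hrefl v u)
    (fun _ => hnd.flip_ne_zero) ha hab

end Polarity

section Lines

variable {F V : Type*} [Field F] [AddCommGroup V] [Module F V]

noncomputable def lineGen (l : {l : Submodule F V // finrank F l = 1}) : V :=
  (Projectivization.mk'' l.1 l.2).rep

theorem lineGen_ne_zero (l : {l : Submodule F V // finrank F l = 1}) : lineGen l ≠ 0 :=
  Projectivization.rep_nonzero _

theorem span_lineGen (l : {l : Submodule F V // finrank F l = 1}) : F ∙ lineGen l = l.1 := by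
  rw [lineGen, ← Projectivization.submodule_eq, Projectivization.submodule_mk'']

def lineSpan (u : V) (hu : u ≠ 0) : {l : Submodule F V // finrank F l = 1} :=
  ⟨F ∙ u, finrank_span_singleton hu⟩

theorem lineSpan_lineGen (l : {l : Submodule F V // finrank F l = 1}) :
    lineSpan (lineGen l) (lineGen_ne_zero l) = l :=
  Subtype.ext (span_lineGen l)

theorem eq_of_lineGen_mem {s t : {l : Submodule F V // finrank F l = 1}}
    (h : lineGen t ∈ F ∙ lineGen s) : t = s := by
  refine Subtype.ext ?_
  rw [← span_lineGen s, ← span_lineGen t]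
  refine eq_of_le_of_finrank_eq ((span_singleton_le_iff_mem _ _).2 h) ?_
  rw [finrank_span_singleton (lineGen_ne_zero t), finrank_span_singleton (lineGen_ne_zero s)]

end Lines

section PolarFunctional

variable {F V : Type*} [Field F] [AddCommGroup V] [Module F V] (Ω : LinearMap.BilinForm F V)
  (f : {l : Submodule F V // finrank F l = 1} → {l : Submodule F V // finrank F l = 1})

open Classical in
noncomputable def polarFunctional (u : V) : Module.Dual F V :=
  if hu : u = 0 then 0 else Ω.flip (lineGen (f (lineSpan u hu)))

theorem polarFunctional_of_ne_zero {u : V} (hu : u ≠ 0) :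
    polarFunctional Ω f u = Ω.flip (lineGen (f (lineSpan u hu))) :=
  dif_neg hu

theorem polarFunctional_lineGen (l : {l : Submodule F V // finrank F l = 1}) :
    polarFunctional Ω f (lineGen l) = Ω.flip (lineGen (f l)) := by
  rw [polarFunctional_of_ne_zero Ω f (lineGen_ne_zero l), lineSpan_lineGen]

theorem polarFunctional_ne_zero (hnd : Ω.Nondegenerate) {u : V} (hu : u ≠ 0) :
    polarFunctional Ω f u ≠ 0 := by
  rw [polarFunctional_of_ne_zero Ω f hu]
  exact hnd.flip_ne_zero (lineGen_ne_zero _)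

theorem polarFunctional_apply_eq_zero_comm
    (h2 : ∀ t₁ t₂, (∀ x ∈ t₁.1, ∀ y ∈ (f t₂).1, Ω x y = 0) ↔
      (∀ x ∈ t₂.1, ∀ y ∈ (f t₁).1, Ω x y = 0)) (u v : V) :
    polarFunctional Ω f u v = 0 ↔ polarFunctional Ω f v u = 0 := by
  rcases eq_or_ne u 0 with rfl | hu
  · simp [polarFunctional]
  rcases eq_or_ne v 0 with rfl | hv
  · simp [polarFunctional]
  have h := h2 (lineSpan v hv) (lineSpan u hu)
  rw [← span_lineGen (f (lineSpan u hu)), ← span_lineGen (f (lineSpan v hv))] at h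
  simpa [polarFunctional_of_ne_zero Ω f hu, polarFunctional_of_ne_zero Ω f hv, lineSpan,
    forall_mem_span_singleton_apply_eq_zero_iff] using h

end PolarFunctional

theorem stmt_16_general {F V : Type*} [Field F] [AddCommGroup V] [Module F V]
    [FiniteDimensional F V]
    (Ω : LinearMap.BilinForm F V) (hnd : Ω.Nondegenerate)
    (hrefl : ∀ x y : V, Ω x y = 0 ↔ Ω y x = 0)
    (f : {l : Submodule F V // Module.finrank F l = 1} →
         {l : Submodule F V // Module.finrank F l = 1})
    (h2 : ∀ t₁ t₂, (∀ x ∈ t₁.1, ∀ y ∈ (f t₂).1, Ω x y = 0) ↔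
                   (∀ x ∈ t₂.1, ∀ y ∈ (f t₁).1, Ω x y = 0)) :
    Function.Bijective f := by
  have hφ := polarFunctional_apply_eq_zero_comm Ω f h2
  refine ⟨fun s t hst => ?_, fun m => ?_⟩
  · have hker :
        ker (polarFunctional Ω f (lineGen s)) ≤ ker (polarFunctional Ω f (lineGen t)) := by
      rw [polarFunctional_lineGen, polarFunctional_lineGen, hst]
    exact (eq_of_lineGen_mem (mem_span_singleton_of_ker_le_ker hφ
      (fun _ => polarFunctional_ne_zero Ω f hnd) (lineGen_ne_zero s) hker)).symm
  · have hm : ker (Ω.flip (lineGen m)) ≠ ⊤ :=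
      mt ker_eq_top.1 (hnd.flip_ne_zero (lineGen_ne_zero m))
    obtain ⟨z, hz, hle⟩ := exists_ne_zero_le_ker_of_ne_top hφ hm
    rw [polarFunctional_of_ne_zero Ω f hz] at hle
    exact ⟨lineSpan z hz, eq_of_lineGen_mem <|
      mem_span_singleton_of_ker_flip_le_ker_flip hnd hrefl (lineGen_ne_zero m) hle⟩

theorem stmt_16 {F V : Type*} [Field F] [AddCommGroup V] [Module F V]
    [FiniteDimensional F V]
    (Ω : LinearMap.BilinForm F V) (hnd : Ω.Nondegenerate)
    (hrefl : ∀ x y : V, Ω x y = 0 ↔ Ω y x = 0)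
    (f : {l : Submodule F V // Module.finrank F l = 1} →
         {l : Submodule F V // Module.finrank F l = 1})
    (h1 : ∀ l, ∀ x ∈ l.1, ∀ y ∈ (f l).1, Ω x y = 0)
    (h2 : ∀ t₁ t₂, (∀ x ∈ t₁.1, ∀ y ∈ (f t₂).1, Ω x y = 0) ↔
                   (∀ x ∈ t₂.1, ∀ y ∈ (f t₁).1, Ω x y = 0)) :
    Function.Bijective f :=
  stmt_16_general Ω hnd hrefl f h2
end
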